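/- Let n ≥ 2 and let q be a quantizer on ℝⁿ over a probability space (Ω, 𝓕, P) that is unbiased and scale-invariant, and suppose there is a finite set G ⊂ ℝⁿ such that q(v, ω) ∈ G for every v with ‖v‖∞ = 1 and every ω ∈ Ω. Let μ be a probability measure on ℝⁿ that is absolutely continuous with respect to Lebesgue measure. Then for μ-almost every x ∈ ℝⁿ, one has x ≠ 0 and Var(q(x)) > 0; i.e., an input drawn from an absolutely continuous distribution almost surely incurs strictly positive quantization variance. -/

import Mathlib

/-!
If `Var(q(x)) = 0` then, by unbiasedness, `q(x, ω) = x` for almost every `ω`. For `x ≠ 0`,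
scale invariance gives `q(x, ω) = ‖x‖∞ • q(x / ‖x‖∞, ω) ∈ ‖x‖∞ • G`, so `x` lies on one of the
finitely many lines `ℝ g`, `g ∈ G`. In dimension at least two these lines, and `{0}`, are
Lebesgue-null.
-/

open MeasureTheory Module
open scoped Pointwise

noncomputable def supNorm {n : ℕ} (x : EuclideanSpace ℝ (Fin n)) : ℝ :=
  ‖(WithLp.equiv 2 (Fin n → ℝ)) x‖

noncomputable def qVar {n : ℕ} {Ω : Type*} [MeasurableSpace Ω] (P : Measure Ω)
    (q : EuclideanSpace ℝ (Fin n) → Ω → EuclideanSpace ℝ (Fin n))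
    (x : EuclideanSpace ℝ (Fin n)) : ℝ :=
  ∫ ω, ‖q x ω - ∫ ω', q x ω' ∂P‖ ^ 2 ∂P

theorem integral_norm_sub_sq_pos_of_forall_mem_finite {Ω E : Type*} [MeasurableSpace Ω]
    {P : Measure Ω} [IsFiniteMeasure P] [NeZero P] [NormedAddCommGroup E]
    {f : Ω → E} {S : Set E} {c : E} (hS : S.Finite) (hfS : ∀ ω, f ω ∈ S)
    (hf : AEStronglyMeasurable f P) (hc : c ∉ S) :
    0 < ∫ ω, ‖f ω - c‖ ^ 2 ∂P := by
  obtain ⟨C, hC⟩ := (hS.image fun y => ‖y - c‖ ^ 2).bddAbove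
  have hint : Integrable (fun ω => ‖f ω - c‖ ^ 2) P :=
    .of_bound ((hf.sub aestronglyMeasurable_const).norm.pow 2) C <| .of_forall fun ω => by
      simpa using hC ⟨f ω, hfS ω, rfl⟩
  have hsupport : Function.support (fun ω => ‖f ω - c‖ ^ 2) = Set.univ :=
    Set.eq_univ_of_forall fun ω => by
      simpa [sub_eq_zero] using fun h : f ω = c => hc (h ▸ hfS ω)
  rw [integral_pos_iff_support_of_nonneg (fun ω => by positivity) hint, hsupport]
  exact Measure.measure_univ_pos.mpr (NeZero.ne P)

theorem Submodule.span_singleton_ne_top {K V : Type*} [DivisionRing K] [AddCommGroup V]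
    [Module K V] [FiniteDimensional K V] (h : 2 ≤ finrank K V) (g : V) :
    Submodule.span K {g} ≠ ⊤ := by
  intro htop
  have := finrank_span_le_card (R := K) ({g} : Set V)
  rw [htop, finrank_top, Set.toFinset_singleton, Finset.card_singleton] at this
  omega

theorem ae_forall_notMem_span_singleton {E : Type*} [NormedAddCommGroup E] [NormedSpace ℝ E]
    [MeasurableSpace E] [BorelSpace E] [FiniteDimensional ℝ E] (μ : Measure E)
    [μ.IsAddHaarMeasure] (h : 2 ≤ finrank ℝ E) {G : Set E} (hG : G.Countable) :
    ∀ᵐ x ∂μ, ∀ g ∈ G, x ∉ Submodule.span ℝ {g} :=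
  (ae_ball_iff hG).mpr fun g _ => measure_eq_zero_iff_ae_notMem.mp <|
    Measure.addHaar_submodule μ _ (Submodule.span_singleton_ne_top h g)

section supNorm

variable {n : ℕ}

theorem supNorm_smul (c : ℝ) (x : EuclideanSpace ℝ (Fin n)) :
    supNorm (c • x) = |c| * supNorm x := by
  simp only [supNorm, WithLp.equiv_apply, WithLp.ofLp_smul, norm_smul, Real.norm_eq_abs]

theorem supNorm_pos {x : EuclideanSpace ℝ (Fin n)} (hx : x ≠ 0) : 0 < supNorm x := by
  simpa [supNorm] using hx

theorem supNorm_inv_smul_self {x : EuclideanSpace ℝ (Fin n)} (hx : x ≠ 0) :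
    supNorm ((supNorm x)⁻¹ • x) = 1 := by
  have hs := supNorm_pos hx
  rw [supNorm_smul, abs_of_pos (inv_pos.mpr hs), inv_mul_cancel₀ hs.ne']

end supNorm

theorem mem_supNorm_smul_of_scale_invariant {n : ℕ} {Ω : Type*}
    {q : EuclideanSpace ℝ (Fin n) → Ω → EuclideanSpace ℝ (Fin n)}
    (hscale : ∀ l : ℝ, 0 ≤ l → ∀ x ω, q (l • x) ω = l • q x ω)
    {G : Set (EuclideanSpace ℝ (Fin n))} (hgrid : ∀ v, supNorm v = 1 → ∀ ω, q v ω ∈ G)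
    {x : EuclideanSpace ℝ (Fin n)} (hx : x ≠ 0) (ω : Ω) :
    q x ω ∈ supNorm x • G := by
  have hs := supNorm_pos hx
  have hq : q x ω = supNorm x • q ((supNorm x)⁻¹ • x) ω := by
    rw [← hscale _ hs.le, smul_inv_smul₀ hs.ne']
  exact hq ▸ Set.smul_mem_smul_set (hgrid _ (supNorm_inv_smul_self hx) ω)

theorem quantizer_variance_pos_ae_general {n : ℕ} (hn : 2 ≤ n)
    {Ω : Type*} [MeasurableSpace Ω] (P : Measure Ω) [IsProbabilityMeasure P]
    (q : EuclideanSpace ℝ (Fin n) → Ω → EuclideanSpace ℝ (Fin n))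
    (hunbiased : ∀ x, (∫ ω, q x ω ∂P) = x)
    (hscale : ∀ l : ℝ, 0 ≤ l → ∀ x ω, q (l • x) ω = l • q x ω)
    (G : Set (EuclideanSpace ℝ (Fin n))) (hGfin : G.Finite)
    (hgrid : ∀ v, supNorm v = 1 → ∀ ω, q v ω ∈ G)
    (μ : Measure (EuclideanSpace ℝ (Fin n)))
    (hac : μ ≪ volume) :
    ∀ᵐ x ∂μ, x ≠ 0 ∧ 0 < qVar P q x := by
  have hlines := ae_forall_notMem_span_singleton volume (by rwa [finrank_euclideanSpace_fin])
    (hGfin.insert 0).countable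
  filter_upwards [hac.ae_le hlines] with x hx
  have hx0 : x ≠ 0 := by simpa using hx 0 (Set.mem_insert 0 G)
  have hxG : x ∉ supNorm x • G := by
    rintro ⟨g, hg, hxg⟩
    exact hx g (Set.mem_insert_of_mem 0 hg)
      (Submodule.mem_span_singleton.mpr ⟨supNorm x, hxg⟩)
  have hint : Integrable (q x) P := .of_integral_ne_zero (by rwa [hunbiased x])
  refine ⟨hx0, ?_⟩
  rw [qVar, hunbiased x]
  exact integral_norm_sub_sq_pos_of_forall_mem_finite hGfin.smul_set
    (mem_supNorm_smul_of_scale_invariant hscale hgrid hx0) hint.aestronglyMeasurable hxG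

/-- For `n ≥ 2`, if `q` is an unbiased, scale-invariant quantizer whose outputs on the
sup-norm unit sphere lie on a finite grid `G`, then for an input `x` drawn from any
probability measure `μ` absolutely continuous with respect to Lebesgue measure,
almost surely `x ≠ 0` and the quantization variance at `x` is strictly positive. -/
theorem quantizer_variance_pos_ae {n : ℕ} (hn : 2 ≤ n)
    {Ω : Type*} [MeasurableSpace Ω] (P : Measure Ω) [IsProbabilityMeasure P]
    (q : EuclideanSpace ℝ (Fin n) → Ω → EuclideanSpace ℝ (Fin n))
    (hmeas : Measurable (Function.uncurry q))
    (hunbiased : ∀ x, (∫ ω, q x ω ∂P) = x)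
    (hscale : ∀ l : ℝ, 0 ≤ l → ∀ x ω, q (l • x) ω = l • q x ω)
    (G : Set (EuclideanSpace ℝ (Fin n))) (hGfin : G.Finite)
    (hgrid : ∀ v, supNorm v = 1 → ∀ ω, q v ω ∈ G)
    (μ : Measure (EuclideanSpace ℝ (Fin n))) [IsProbabilityMeasure μ]
    (hac : μ ≪ volume) :
    ∀ᵐ x ∂μ, x ≠ 0 ∧ 0 < qVar P q x :=
  quantizer_variance_pos_ae_general hn P q hunbiased hscale G hGfin hgrid μ hac
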